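/- Let α, β, γ, μ, ν, κ, D be real constants with ν ≠ 0 and γ ≠ 0. Then the travelling-wave coefficients A₁(y) = α/(ν y + μ D²), A₀ = 0, B₀(y) = β/(ν y + μ D²), C₂ = C₁ = 0, C₀(y) = (2γ y + κ − D²)/(ν y + μ D²), D₄ = D₃ = 0, D₂(y) = 2γ/(ν y + μ D²), D₁ = D₀ = 0 satisfy the ten linearization conditions (L1)–(L10) at every point (x,y) with ν y + μ D² ≠ 0 if and only if α = 4ν, β = 3ν, and κ ν = (2γμ + ν) D². -/

import Mathlib

open Real Set

/-! For coefficients that depend on `y` alone and with `A₀ = C₂ = C₁ = D₄ = D₃ = D₁ = D₀ = 0`,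
only (L2), (L3), (L5) and (L8) carry content, (L10) being `c₀` times (L8). After clearing the
denominator `ν y + μ D²` they become `4β = 3α`, `α (α - 4ν) = 0`, `κν = (2γμ + ν) D²` and
`α (2γy + κ - D²) = 8γ (ν y + μ D²)`. At the point where the denominator is `1`, the choice
`α = 0` would force `γ = 0` through the last of these, so `α = 4ν`; conversely the three
relations make the last one an identity in `y`. -/

/-- Partial derivative in the first variable. -/
noncomputable def pdx (f : ℝ → ℝ → ℝ) (x y : ℝ) : ℝ := deriv (fun x' => f x' y) x

/-- Partial derivative in the second variable. -/
noncomputable def pdy (f : ℝ → ℝ → ℝ) (x y : ℝ) : ℝ := deriv (fun y' => f x y') y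

/-- The ten linearization conditions (L1)–(L10) at a point `(x, y)`. -/
def LinConds (A1 A0 B0 C2 C1 C0 D4 D3 D2 D1 D0 : ℝ → ℝ → ℝ) (x y : ℝ) : Prop :=
  -- (L1)
  pdy A0 x y - pdx A1 x y = 0 ∧
  -- (L2)
  4 * B0 x y - 3 * A1 x y = 0 ∧
  -- (L3)
  12 * pdy A1 x y + 3 * (A1 x y) ^ 2 - 8 * C2 x y = 0 ∧
  -- (L4)
  12 * pdx A1 x y + 3 * A0 x y * A1 x y - 4 * C1 x y = 0 ∧
  -- (L5)
  32 * pdy C0 x y + 12 * pdx A0 x y * A1 x y - 16 * pdx C1 x y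
    + 3 * (A0 x y) ^ 2 * A1 x y - 4 * A0 x y * C1 x y = 0 ∧
  -- (L6)
  4 * pdy C2 x y + A1 x y * C2 x y - 24 * D4 x y = 0 ∧
  -- (L7)
  4 * pdy C1 x y + A1 x y * C1 x y - 12 * D3 x y = 0 ∧
  -- (L8)
  16 * pdx C1 x y - 12 * pdx A0 x y * A1 x y - 3 * (A0 x y) ^ 2 * A1 x y
    + 4 * A0 x y * C1 x y + 8 * A1 x y * C0 x y - 32 * D2 x y = 0 ∧
  -- (L9)
  192 * pdx D2 x y + 36 * pdx A0 x y * A0 x y * A1 x y - 48 * pdx A0 x y * C1 x y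
    - 48 * pdx C0 x y * A1 x y - 288 * pdy D1 x y + 9 * (A0 x y) ^ 3 * A1 x y
    - 12 * (A0 x y) ^ 2 * C1 x y - 36 * A0 x y * A1 x y * C0 x y
    + 48 * A0 x y * D2 x y + 32 * C0 x y * C1 x y = 0 ∧
  -- (L10)
  384 * pdx (pdy D1) x y -
    (3 * ((3 * A0 x y * A1 x y - 4 * C1 x y) * (A0 x y) ^ 2
          + 16 * (2 * A1 x y * D1 x y + C0 x y * C1 x y)
          - 16 * (A1 x y * C0 x y - D2 x y) * A0 x y) * A0 x y
      - 32 * (4 * (C1 x y * D1 x y - 2 * C2 x y * D0 x y + C0 x y * D2 x y)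
          + (3 * A1 x y * D0 x y - (C0 x y) ^ 2) * A1 x y)
      - 96 * pdy D1 x y * A0 x y + 384 * pdy D0 x y * A1 x y
      + 1536 * pdy (pdy D0) x y
      - 16 * (3 * A0 x y * A1 x y - 4 * C1 x y) * pdx C0 x y
      + 12 * ((3 * A0 x y * A1 x y - 4 * C1 x y) * A0 x y
          - 4 * (A1 x y * C0 x y - 4 * D2 x y)) * pdx A0 x y) = 0

theorem linConds_autonomous_iff (a1 b0 c0 d2 : ℝ → ℝ) (x y : ℝ) :
    LinConds (fun _ y => a1 y) (fun _ _ => 0) (fun _ y => b0 y) (fun _ _ => 0) (fun _ _ => 0)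
        (fun _ y => c0 y) (fun _ _ => 0) (fun _ _ => 0) (fun _ y => d2 y) (fun _ _ => 0)
        (fun _ _ => 0) x y ↔
      4 * b0 y = 3 * a1 y ∧ 4 * deriv a1 y + a1 y ^ 2 = 0 ∧ deriv c0 y = 0 ∧
        a1 y * c0 y = 4 * d2 y := by
  simp only [LinConds, pdx, pdy, deriv_const']
  constructor
  · rintro ⟨-, hL2, hL3, -, hL5, -, -, hL8, -, -⟩
    exact ⟨by linarith, by linarith, by linarith, by linarith⟩
  · rintro ⟨h2, h3, h5, h8⟩
    refine ⟨by ring, by linarith, by linarith, by ring, by linarith, by ring, by ring, by linarith,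
      by ring, ?_⟩
    linear_combination -32 * c0 y * h8

section Affine

variable {𝕜 : Type*} [NontriviallyNormedField 𝕜]

theorem hasDerivAt_const_div_affine (c a b y : 𝕜) (h : a * y + b ≠ 0) :
    HasDerivAt (fun y => c / (a * y + b)) (-(c * a) / (a * y + b) ^ 2) y := by
  have h_affine : HasDerivAt (fun y => a * y + b) a y := by
    simpa using ((hasDerivAt_id y).const_mul a).add_const b
  exact ((hasDerivAt_const y c).div h_affine h).congr_deriv (by ring)

theorem hasDerivAt_affine_div_affine (p q a b y : 𝕜) (h : a * y + b ≠ 0) :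
    HasDerivAt (fun y => (p * y + q) / (a * y + b)) ((p * b - a * q) / (a * y + b) ^ 2) y := by
  have h_num : HasDerivAt (fun y => p * y + q) p y := by
    simpa using ((hasDerivAt_id y).const_mul p).add_const q
  have h_den : HasDerivAt (fun y => a * y + b) a y := by
    simpa using ((hasDerivAt_id y).const_mul a).add_const b
  exact (h_num.div h_den h).congr_deriv (by ring)

end Affine

theorem linConds_travellingWave_iff (α β γ μ ν κ D x y : ℝ) (hs : ν * y + μ * D ^ 2 ≠ 0) :
    LinConds (fun _ y => α / (ν * y + μ * D ^ 2)) (fun _ _ => 0)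
        (fun _ y => β / (ν * y + μ * D ^ 2)) (fun _ _ => 0) (fun _ _ => 0)
        (fun _ y => (2 * γ * y + κ - D ^ 2) / (ν * y + μ * D ^ 2)) (fun _ _ => 0)
        (fun _ _ => 0) (fun _ y => 2 * γ / (ν * y + μ * D ^ 2)) (fun _ _ => 0)
        (fun _ _ => 0) x y ↔
      4 * β = 3 * α ∧ α * (α - 4 * ν) = 0 ∧ κ * ν = (2 * γ * μ + ν) * D ^ 2 ∧
        α * (2 * γ * y + κ - D ^ 2) = 8 * γ * (ν * y + μ * D ^ 2) := by
  have hA1 := (hasDerivAt_const_div_affine α ν (μ * D ^ 2) y hs).deriv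
  have hC0 : deriv (fun y => (2 * γ * y + κ - D ^ 2) / (ν * y + μ * D ^ 2)) y =
      (2 * γ * (μ * D ^ 2) - ν * (κ - D ^ 2)) / (ν * y + μ * D ^ 2) ^ 2 := by
    simpa only [add_sub_assoc] using
      (hasDerivAt_affine_div_affine (2 * γ) (κ - D ^ 2) ν (μ * D ^ 2) y hs).deriv
  rw [linConds_autonomous_iff, hA1, hC0]
  refine and_congr ?_ (and_congr ?_ (and_congr ?_ ?_))
  · rw [mul_div_assoc', mul_div_assoc', div_left_inj' hs]
  all_goals field_simp; constructor <;> intro h <;> linarith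

/-- Case `ν ≠ 0`, `γ ≠ 0`: the travelling-wave coefficients satisfy the ten
linearization conditions (L1)–(L10) at every point `(x, y)` with `ν y + μ D² ≠ 0`
if and only if `α = 4ν`, `β = 3ν` and `κ ν = (2γμ + ν) D²`. -/
theorem linconds_case_gamma_ne_zero (α β γ μ ν κ D : ℝ) (hν : ν ≠ 0) (hγ : γ ≠ 0) :
    (∀ x y : ℝ, ν * y + μ * D ^ 2 ≠ 0 →
      LinConds
        (fun _ y => α / (ν * y + μ * D ^ 2))                       -- A₁
        (fun _ _ => 0)                                             -- A₀
        (fun _ y => β / (ν * y + μ * D ^ 2))                       -- B₀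
        (fun _ _ => 0)                                             -- C₂
        (fun _ _ => 0)                                             -- C₁
        (fun _ y => (2 * γ * y + κ - D ^ 2) / (ν * y + μ * D ^ 2)) -- C₀
        (fun _ _ => 0)                                             -- D₄
        (fun _ _ => 0)                                             -- D₃
        (fun _ y => 2 * γ / (ν * y + μ * D ^ 2))                   -- D₂
        (fun _ _ => 0)                                             -- D₁
        (fun _ _ => 0)                                             -- D₀
        x y) ↔
      (α = 4 * ν ∧ β = 3 * ν ∧ κ * ν = (2 * γ * μ + ν) * D ^ 2) := by
  constructor
  · intro h
    obtain ⟨y₀, hy₀⟩ : ∃ y₀, ν * y₀ + μ * D ^ 2 = 1 :=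
      ⟨(1 - μ * D ^ 2) / ν, by field_simp; ring⟩
    have hs : ν * y₀ + μ * D ^ 2 ≠ 0 := by simp [hy₀]
    obtain ⟨hβ, hα, hκ, hL8⟩ :=
      (linConds_travellingWave_iff α β γ μ ν κ D 0 y₀ hs).1 (h 0 y₀ hs)
    have hα : α = 4 * ν := by
      rcases mul_eq_zero.1 hα with rfl | hα
      · rw [hy₀] at hL8
        exact absurd (by linarith : γ = 0) hγ
      · linarith
    exact ⟨hα, by linarith, hκ⟩
  · rintro ⟨rfl, rfl, hκ⟩ x y hs
    exact (linConds_travellingWave_iff _ _ _ _ _ _ _ x y hs).2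
      ⟨by ring, by ring, hκ, by linear_combination 4 * hκ⟩
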